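/- arXiv:1902.05317 — 3 statements merged into one kernel-verified Lean document; each statement's English description precedes it below -/
import Mathlib

section
/- On the flat square 2-torus T² = R²/Z² of area 1, for every point p the integral ∫_{T²} d(p,x) dA equals (1/6)(√2 + ln(1+√2)), and this value is strictly greater than (1/2) · diam(T²) · Area(T²) = √2/4. -/
open MeasureTheory Metric

/-- The distance on the flat torus `ℝ²/ℤ²`, expressed on the fundamental domain:
`d(p,x) = inf over integer translates m of ‖x - p + m‖` (Euclidean norm). -/
noncomputable def torusDist (p x : EuclideanSpace ℝ (Fin 2)) : ℝ :=
  ⨅ m : Fin 2 → ℤ, ‖x - p + (WithLp.equiv 2 (Fin 2 → ℝ)).symm (fun i => (m i : ℝ))‖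

/-!
The infimum over integer translates is attained coordinatewise, so
`d(p, x) = √(‖x₀ - p₀‖² + ‖x₁ - p₁‖²)`, the norms taken in `ℝ/ℤ`. As a function on `ℝ` that
norm is 1-periodic and even, so integrating over a period in each variable removes `p` and folds
onto `[0, 1/2]`: the integral is `4 ∫∫_{[0,1/2]²} √(s² + t²)`. By symmetry in `s ↔ t` this is
eight times the integral over the triangle `0 ≤ t ≤ s ≤ 1/2`, where the substitution `t = s w` separates variables:
`∫₀^s √(s² + t²) dt = s² ∫₀¹ √(1 + w²) dw = s² (√2 + arsinh 1) / 2`.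
-/

open Set Function Real

namespace UnitAddCircle

lemma norm_coe_le_abs_add_intCast (t : ℝ) (m : ℤ) : ‖(t : UnitAddCircle)‖ ≤ |t + m| := by
  simpa [UnitAddCircle.norm_eq] using round_le t (-m)

lemma norm_coe_eq_abs_add_neg_round (t : ℝ) : ‖(t : UnitAddCircle)‖ = |t + (-round t : ℤ)| := by
  rw [UnitAddCircle.norm_eq]
  push_cast
  ring_nf

end UnitAddCircle

lemma EuclideanSpace.iInf_norm_add_intCast {ι : Type*} [Fintype ι] (v : EuclideanSpace ℝ ι) :
    ⨅ m : ι → ℤ, ‖v + (WithLp.equiv 2 (ι → ℝ)).symm (fun i => (m i : ℝ))‖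
      = √(∑ i, ‖(v i : UnitAddCircle)‖ ^ 2) := by
  have hnorm (m : ι → ℤ) : ‖v + (WithLp.equiv 2 (ι → ℝ)).symm (fun i => (m i : ℝ))‖
      = √(∑ i, |v i + m i| ^ 2) := by
    simp [EuclideanSpace.norm_eq]
  refine le_antisymm ?_ (le_ciInf fun m => ?_)
  · refine (ciInf_le ⟨0, ?_⟩ fun i => -round (v i)).trans_eq ?_
    · rintro _ ⟨m, rfl⟩
      exact norm_nonneg _
    · simp_rw [hnorm, UnitAddCircle.norm_coe_eq_abs_add_neg_round]
  · rw [hnorm]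
    gcongr with i
    exact UnitAddCircle.norm_coe_le_abs_add_intCast _ _

lemma torusDist_eq (p x : EuclideanSpace ℝ (Fin 2)) :
    torusDist p x = √(‖((x 0 - p 0 : ℝ) : UnitAddCircle)‖ ^ 2
      + ‖((x 1 - p 1 : ℝ) : UnitAddCircle)‖ ^ 2) := by
  rw [torusDist, EuclideanSpace.iInf_norm_add_intCast, Fin.sum_univ_two]
  rfl

lemma intervalIntegral_comp_abs_of_nonneg {f : ℝ → ℝ} (hf : Continuous f) {a : ℝ} (ha : 0 ≤ a) :
    ∫ t in -a..a, f |t| = 2 * ∫ t in (0 : ℝ)..a, f t := by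
  have hint (b c : ℝ) : IntervalIntegrable (fun t => f |t|) volume b c :=
    (hf.comp continuous_abs).intervalIntegrable b c
  have hneg := intervalIntegral.integral_comp_neg (a := 0) (b := a) (fun t => f |t|)
  simp only [abs_neg, neg_zero] at hneg
  have habs : ∫ t in (0 : ℝ)..a, f |t| = ∫ t in (0 : ℝ)..a, f t :=
    intervalIntegral.integral_congr fun t ht => by
      rw [uIcc_of_le ha] at ht
      rw [abs_of_nonneg ht.1]
  rw [← intervalIntegral.integral_add_adjacent_intervals (hint _ 0) (hint 0 _), ← hneg, habs,
    two_mul]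

lemma intervalIntegral_comp_norm_unitAddCircle {f : ℝ → ℝ} (hf : Continuous f) (c : ℝ) :
    ∫ t in (0 : ℝ)..1, f ‖((t - c : ℝ) : UnitAddCircle)‖ = 2 * ∫ t in (0 : ℝ)..(1 / 2), f t := by
  have hper : Periodic (fun t : ℝ => f ‖(t : UnitAddCircle)‖) 1 := fun t => by
    simp only [AddCircle.coe_add_period]
  calc ∫ t in (0 : ℝ)..1, f ‖((t - c : ℝ) : UnitAddCircle)‖
      = ∫ t in -c..-c + 1, f ‖(t : UnitAddCircle)‖ := by
        rw [intervalIntegral.integral_comp_sub_right (fun t => f ‖(t : UnitAddCircle)‖)]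
        congr 1 <;> ring
    _ = ∫ t in -(1 / 2 : ℝ)..(1 / 2), f |t| := by
        rw [hper.intervalIntegral_add_eq (-c) (-(1 / 2)),
          show -(1 / 2) + 1 = (1 / 2 : ℝ) by norm_num]
        refine intervalIntegral.integral_congr fun t ht => ?_
        rw [uIcc_of_le (by norm_num), mem_Icc] at ht
        rw [(AddCircle.norm_coe_eq_abs_iff (p := 1) one_ne_zero).2 (by norm_num [abs_le, ht])]
    _ = 2 * ∫ t in (0 : ℝ)..(1 / 2), f t := intervalIntegral_comp_abs_of_nonneg hf (by norm_num)

lemma setIntegral_unitSquare {F : ℝ → ℝ → ℝ} (hF : Continuous (uncurry F)) :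
    ∫ x in {x : EuclideanSpace ℝ (Fin 2) | ∀ i, x i ∈ Ico (0 : ℝ) 1}, F (x 0) (x 1)
      = ∫ s in (0 : ℝ)..1, ∫ t in (0 : ℝ)..1, F s t := by
  have hmp := (volume_preserving_finTwoArrow ℝ).comp
    (EuclideanSpace.volume_preserving_symm_measurableEquiv_toLp (Fin 2))
  have hemb := ((MeasurableEquiv.toLp 2 (Fin 2 → ℝ)).symm.trans
    MeasurableEquiv.finTwoArrow).measurableEmbedding
  have hset : (MeasurableEquiv.finTwoArrow ∘ (MeasurableEquiv.toLp 2 (Fin 2 → ℝ)).symm) ⁻¹'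
      (Ico (0 : ℝ) 1 ×ˢ Ico (0 : ℝ) 1)
      = {x : EuclideanSpace ℝ (Fin 2) | ∀ i, x i ∈ Ico (0 : ℝ) 1} := by
    ext x
    simp [MeasurableEquiv.finTwoArrow, Fin.forall_fin_two]
  have hpre : ∫ x in {x : EuclideanSpace ℝ (Fin 2) | ∀ i, x i ∈ Ico (0 : ℝ) 1}, F (x 0) (x 1)
      = ∫ z in Ico (0 : ℝ) 1 ×ˢ Ico (0 : ℝ) 1, uncurry F z := by
    rw [← hset]
    exact hmp.setIntegral_preimage_emb hemb (uncurry F) _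
  have hint : IntegrableOn (uncurry F) (Ico (0 : ℝ) 1 ×ˢ Ico (0 : ℝ) 1) (volume.prod volume) :=
    (hF.continuousOn.integrableOn_compact (isCompact_Icc.prod isCompact_Icc)).mono_set
      (prod_mono Ico_subset_Icc_self Ico_subset_Icc_self)
  rw [hpre, Measure.volume_eq_prod, setIntegral_prod _ hint]
  simp only [intervalIntegral.integral_of_le zero_le_one, integral_Ico_eq_integral_Ioc,
    uncurry_apply_pair]

lemma intervalIntegral_eq_setIntegral_Icc_indicator {g : ℝ → ℝ} {a c d : ℝ} (h0c : 0 ≤ c)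
    (hcd : c ≤ d) (hda : d ≤ a) :
    ∫ t in c..d, g t = ∫ t in Icc 0 a, (Icc c d).indicator g t := by
  rw [setIntegral_indicator measurableSet_Icc, Icc_inter_Icc, max_eq_right h0c, min_eq_right hda,
    integral_Icc_eq_integral_Ioc, intervalIntegral.integral_of_le hcd]

lemma integral_integral_triangle_swap {h : ℝ → ℝ → ℝ} (hh : Continuous (uncurry h)) {a : ℝ}
    (ha : 0 ≤ a) :
    ∫ s in (0 : ℝ)..a, ∫ t in s..a, h s t = ∫ t in (0 : ℝ)..a, ∫ s in (0 : ℝ)..t, h s t := by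
  set F : ℝ → ℝ → ℝ := fun s t => if s ≤ t then h s t else 0
  have hF : IntegrableOn (uncurry F) (Icc 0 a ×ˢ Icc 0 a) := by
    have : uncurry F = {p : ℝ × ℝ | p.1 ≤ p.2}.indicator (uncurry h) := by
      ext ⟨s, t⟩
      simp [F, indicator]
    rw [this]
    exact (hh.continuousOn.integrableOn_compact (isCompact_Icc.prod isCompact_Icc)).indicator
      (measurableSet_le measurable_fst measurable_snd)
  have hL : ∀ s ∈ Icc 0 a, ∫ t in s..a, h s t = ∫ t in Icc 0 a, F s t := by
    intro s hs
    rw [intervalIntegral_eq_setIntegral_Icc_indicator hs.1 hs.2 le_rfl]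
    refine setIntegral_congr_fun measurableSet_Icc fun t ht => ?_
    simp [F, indicator, ht.2]
  have hR : ∀ t ∈ Icc 0 a, ∫ s in (0 : ℝ)..t, h s t = ∫ s in Icc 0 a, F s t := by
    intro t ht
    rw [intervalIntegral_eq_setIntegral_Icc_indicator le_rfl ht.1 ht.2]
    refine setIntegral_congr_fun measurableSet_Icc fun s hs => ?_
    simp [F, indicator, hs.1]
  rw [intervalIntegral.integral_of_le ha, intervalIntegral.integral_of_le ha,
    ← integral_Icc_eq_integral_Ioc, ← integral_Icc_eq_integral_Ioc,
    setIntegral_congr_fun measurableSet_Icc hL, setIntegral_congr_fun measurableSet_Icc hR]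
  apply integral_integral_swap
  rwa [Measure.prod_restrict, ← Measure.volume_eq_prod]

lemma integral_integral_eq_two_mul_of_symm {f : ℝ → ℝ → ℝ} (hf : Continuous (uncurry f))
    (hsymm : ∀ s t, f s t = f t s) {a : ℝ} (ha : 0 ≤ a) :
    ∫ s in (0 : ℝ)..a, ∫ t in (0 : ℝ)..a, f s t
      = 2 * ∫ s in (0 : ℝ)..a, ∫ t in (0 : ℝ)..s, f s t := by
  have hlow : Continuous fun s => ∫ t in (0 : ℝ)..s, f s t :=
    intervalIntegral.continuous_parametric_intervalIntegral_of_continuous hf continuous_id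
  have hup : Continuous fun s => ∫ t in s..a, f s t := by
    have : (fun s => ∫ t in s..a, f s t) = fun s => -∫ t in a..s, f s t :=
      funext fun s => intervalIntegral.integral_symm _ _
    rw [this]
    exact (intervalIntegral.continuous_parametric_intervalIntegral_of_continuous hf
      continuous_id).neg
  have hsplit : ∀ s ∈ uIcc 0 a,
      ∫ t in (0 : ℝ)..a, f s t = (∫ t in (0 : ℝ)..s, f s t) + ∫ t in s..a, f s t := fun s _ =>
    (intervalIntegral.integral_add_adjacent_intervals
      ((hf.comp (Continuous.prodMk_right s)).intervalIntegrable _ _)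
      ((hf.comp (Continuous.prodMk_right s)).intervalIntegrable _ _)).symm
  have hswap := integral_integral_triangle_swap (h := fun s t => f t s)
    (hf.comp continuous_swap) ha
  simp only [← hsymm] at hswap
  rw [intervalIntegral.integral_congr hsplit, intervalIntegral.integral_add
    (hlow.intervalIntegrable _ _) (hup.intervalIntegrable _ _), hswap, two_mul]

lemma integral_sqrt_one_add_sq :
    ∫ w in (0 : ℝ)..1, √(1 + w ^ 2) = (√2 + arsinh 1) / 2 := by
  have hderiv (w : ℝ) :
      HasDerivAt (fun w => (w * √(1 + w ^ 2) + arsinh w) / 2) (√(1 + w ^ 2)) w := by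
    have hpos : 0 < 1 + w ^ 2 := by positivity
    have hsqrt : HasDerivAt (fun w => √(1 + w ^ 2)) (2 * w / (2 * √(1 + w ^ 2))) w := by
      simpa using ((hasDerivAt_pow 2 w).const_add 1).sqrt hpos.ne'
    refine ((((hasDerivAt_id' w).mul hsqrt).add (hasDerivAt_arsinh w)).div_const 2).congr_deriv ?_
    field_simp
    rw [sq_sqrt hpos.le]
    ring
  rw [intervalIntegral.integral_eq_sub_of_hasDerivAt (fun w _ => hderiv w)
    ((by fun_prop : Continuous fun w : ℝ => √(1 + w ^ 2)).intervalIntegrable _ _)]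
  norm_num

lemma integral_sqrt_sq_add_sq_of_nonneg {s : ℝ} (hs : 0 ≤ s) :
    ∫ t in (0 : ℝ)..s, √(s ^ 2 + t ^ 2) = s ^ 2 * ((√2 + arsinh 1) / 2) := by
  have hscale := intervalIntegral.smul_integral_comp_mul_left (a := 0) (b := 1)
    (fun t => √(s ^ 2 + t ^ 2)) s
  have hfac (w : ℝ) : √(s ^ 2 + (s * w) ^ 2) = s * √(1 + w ^ 2) := by
    rw [show s ^ 2 + (s * w) ^ 2 = s ^ 2 * (1 + w ^ 2) by ring, sqrt_mul (sq_nonneg s),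
      sqrt_sq hs]
  simp only [hfac, mul_zero, mul_one, smul_eq_mul, intervalIntegral.integral_const_mul,
    integral_sqrt_one_add_sq] at hscale
  rw [← hscale]
  ring

lemma integral_integral_sqrt_sq_add_sq :
    ∫ s in (0 : ℝ)..(1 / 2), ∫ t in (0 : ℝ)..(1 / 2), √(s ^ 2 + t ^ 2)
      = (√2 + log (1 + √2)) / 24 := by
  have harsinh : arsinh 1 = log (1 + √2) := by norm_num [arsinh]
  rw [integral_integral_eq_two_mul_of_symm (by fun_prop) (fun s t => by rw [add_comm])
      (by norm_num),
    intervalIntegral.integral_congr fun s hs =>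
      integral_sqrt_sq_add_sq_of_nonneg (uIcc_of_le (by norm_num : (0 : ℝ) ≤ 1 / 2) ▸ hs).1,
    intervalIntegral.integral_mul_const, integral_pow, harsinh]
  norm_num
  ring

lemma sqrt_two_div_two_lt_log_one_add_sqrt_two : √2 / 2 < log (1 + √2) := by
  have hsq : √2 ^ 2 = 2 := sq_sqrt (by norm_num)
  have hlt : √2 < 1.415 := by nlinarith [sqrt_nonneg 2]
  have hpos : 0 < (1 + √2) / 2 := by positivity
  -- `log (1 + √2) = log 2 + log ((1 + √2) / 2) ≥ log 2 + 1 - 2 (√2 - 1)`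
  have hlog := one_sub_inv_le_log_of_pos hpos
  have hinv : ((1 + √2) / 2)⁻¹ = 2 * (√2 - 1) := by
    rw [inv_div, div_eq_iff (by positivity)]
    nlinarith
  rw [log_div (by positivity) two_ne_zero, hinv] at hlog
  linarith [log_two_gt_d9]

/-- On the flat square torus `T² = ℝ²/ℤ²` of area 1 (represented by the
fundamental domain `[0,1)²` with the quotient flat distance `torusDist`), for every
point `p` one has `∫_{T²} d(p,x) dA = (1/6)(√2 + ln(1+√2))`, and this value is
strictly greater than `(1/2) · diam(T²) · Area(T²) = √2/4`. -/
theorem integral_torusDist (p : EuclideanSpace ℝ (Fin 2)) :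
    (∫ x in {x : EuclideanSpace ℝ (Fin 2) | ∀ i, x i ∈ Set.Ico (0 : ℝ) 1},
        torusDist p x) = (1 / 6) * (Real.sqrt 2 + Real.log (1 + Real.sqrt 2)) ∧
    (1 / 6) * (Real.sqrt 2 + Real.log (1 + Real.sqrt 2)) >
      (1 / 2) * (Real.sqrt 2 / 2) * 1 := by
  refine ⟨?_, by linarith [sqrt_two_div_two_lt_log_one_add_sqrt_two]⟩
  calc ∫ x in {x : EuclideanSpace ℝ (Fin 2) | ∀ i, x i ∈ Ico (0 : ℝ) 1}, torusDist p x
      = ∫ s in (0 : ℝ)..1, ∫ t in (0 : ℝ)..1,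
          √(‖((s - p 0 : ℝ) : UnitAddCircle)‖ ^ 2 + ‖((t - p 1 : ℝ) : UnitAddCircle)‖ ^ 2) := by
        simp_rw [torusDist_eq]
        exact setIntegral_unitSquare (F := fun s t =>
          √(‖((s - p 0 : ℝ) : UnitAddCircle)‖ ^ 2 + ‖((t - p 1 : ℝ) : UnitAddCircle)‖ ^ 2))
          (by fun_prop)
    _ = ∫ s in (0 : ℝ)..1, 2 * ∫ t in (0 : ℝ)..(1 / 2),
          √(‖((s - p 0 : ℝ) : UnitAddCircle)‖ ^ 2 + t ^ 2) :=
        intervalIntegral.integral_congr fun s _ =>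
          intervalIntegral_comp_norm_unitAddCircle
            (f := fun r => √(‖((s - p 0 : ℝ) : UnitAddCircle)‖ ^ 2 + r ^ 2)) (by fun_prop) (p 1)
    _ = 2 * (2 * ∫ s in (0 : ℝ)..(1 / 2), ∫ t in (0 : ℝ)..(1 / 2), √(s ^ 2 + t ^ 2)) := by
        rw [intervalIntegral.integral_const_mul, intervalIntegral_comp_norm_unitAddCircle
          (f := fun r => ∫ t in (0 : ℝ)..(1 / 2), √(r ^ 2 + t ^ 2))
          (intervalIntegral.continuous_parametric_intervalIntegral_of_continuous'
            (by fun_prop) _ _)]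
    _ = _ := by
        rw [integral_integral_sqrt_sq_add_sq]
        ring
end

section
/- Let M be an n-dimensional compact Riemannian manifold with nonnegative Ricci curvature. Then for every p ∈ M, ∫_M d(p,x) dvol > c(n) · diam(M) · Vol(M), where c(n) = (1 − 1/(n+1))^n · 1/(2^{n+1}(n+1)) = (n/(n+1))^n / (2^{n+1}(n+1)). -/
open MeasureTheory Metric

/-!
Pick `q` with `d(p, q) ≥ d/2`, where `d = diam M`. On `B_q(r)` the function `d(p, ·)` exceeds
`d/2 - r`, and Bishop–Gromov comparison of `B_q(r)` with `B_q(R) = M` for `R > d` gives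
`Vol(B_q(r)) ≥ (r/d)^n Vol(M)`. Hence `∫ d(p, x) > (r/d)^n (d/2 - r) Vol(M)` for every
`0 < r < d/2`, and `r = n d / (2 (n + 1))` maximizes the right-hand side.
-/

section

variable {X : Type*} [PseudoMetricSpace X]

lemma exists_half_diam_le_dist [CompactSpace X] (p : X) :
    ∃ q, diam (Set.univ : Set X) / 2 ≤ dist p q := by
  obtain ⟨q, -, hq⟩ := isCompact_univ.exists_isMaxOn ⟨p, trivial⟩
    (continuous_const.dist continuous_id : Continuous (dist p)).continuousOn
  refine ⟨q, ?_⟩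
  have hsub : (Set.univ : Set X) ⊆ closedBall p (dist p q) := fun x _ =>
    mem_closedBall'.2 (hq trivial)
  linarith [(diam_mono hsub isBounded_closedBall).trans (diam_closedBall dist_nonneg)]

variable [MeasurableSpace X] (μ : Measure X) [IsFiniteMeasure μ]

lemma measureReal_univ_mul_pow_le_of_bishopGromov {n : ℕ} {q : X} {r D : ℝ} (hr : 0 ≤ r)
    (hrD : r ≤ D) (hD : ∀ x, dist q x ≤ D)
    (hBG : ∀ R, r ≤ R → μ (ball q R) * ENNReal.ofReal (r ^ n) ≤
      μ (ball q r) * ENNReal.ofReal (R ^ n)) :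
    μ.real Set.univ * r ^ n ≤ μ.real (ball q r) * D ^ n := by
  have hlarge : ∀ R, D < R → μ.real Set.univ * r ^ n ≤ μ.real (ball q r) * R ^ n := by
    intro R hR
    have hball : ball q R = Set.univ :=
      Set.eq_univ_of_forall fun x => mem_ball'.2 ((hD x).trans_lt hR)
    have h := ENNReal.toReal_mono (by finiteness) (hBG R (hrD.trans hR.le))
    rwa [hball, ENNReal.toReal_mul, ENNReal.toReal_mul, ENNReal.toReal_ofReal (by positivity),
      ENNReal.toReal_ofReal (pow_nonneg (hr.trans (hrD.trans hR.le)) n), ← measureReal_def,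
      ← measureReal_def] at h
  -- `ball q D` need not be all of `X`, so let `R ↓ D`.
  have hlim : Filter.Tendsto (fun R => μ.real (ball q r) * R ^ n) (nhdsWithin D (Set.Ioi D))
      (nhds (μ.real (ball q r) * D ^ n)) :=
    ((continuous_const.mul (continuous_pow n)).tendsto D).mono_left nhdsWithin_le_nhds
  exact ge_of_tendsto hlim (eventually_nhdsWithin_of_forall hlarge)

lemma measureReal_ball_mul_lt_integral_dist [CompactSpace X] [OpensMeasurableSpace X]
    {p q : X} {r : ℝ} (hr : r ≤ dist p q) (hμ : μ (ball q r) ≠ 0) :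
    μ.real (ball q r) * (dist p q - r) < ∫ x, dist p x ∂μ := by
  set S := {x | dist p q - r < dist p x}
  have hsub : ball q r ⊆ S := fun x hx => by
    have := dist_triangle p x q
    have := mem_ball.1 hx
    simp only [S, Set.mem_ofPred_eq]
    linarith
  have hint : Integrable (dist p) μ :=
    (continuous_const.dist continuous_id).integrable_of_hasCompactSupport
      (HasCompactSupport.of_compactSpace _)
  calc μ.real (ball q r) * (dist p q - r)
      ≤ μ.real S * (dist p q - r) :=
        mul_le_mul_of_nonneg_right (measureReal_mono hsub) (sub_nonneg.2 hr)
    _ < ∫ x in S, dist p x ∂μ :=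
        setIntegral_gt_gt (sub_nonneg.2 hr) hint.integrableOn (measure_mono_null hsub |>.mt hμ)
    _ ≤ ∫ x, dist p x ∂μ :=
        setIntegral_le_integral hint (Filter.Eventually.of_forall fun x => dist_nonneg)

theorem integral_dist_gt_of_bishopGromov [CompactSpace X] [OpensMeasurableSpace X]
    (hμ : μ Set.univ ≠ 0) {n : ℕ}
    (hBG : ∀ (p : X) (r R : ℝ), 0 < r → r ≤ R →
      μ (ball p R) * ENNReal.ofReal (r ^ n) ≤ μ (ball p r) * ENNReal.ofReal (R ^ n))
    (p : X) {r : ℝ} (hr : 0 < r) (hrd : r < diam (Set.univ : Set X) / 2) :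
    (r / diam (Set.univ : Set X)) ^ n * (diam (Set.univ : Set X) / 2 - r) * μ.real Set.univ <
      ∫ x, dist p x ∂μ := by
  set d := diam (Set.univ : Set X)
  have hd : 0 < d := by linarith
  obtain ⟨q, hq⟩ := exists_half_diam_le_dist p
  have hvol : μ.real Set.univ * r ^ n ≤ μ.real (ball q r) * d ^ n :=
    measureReal_univ_mul_pow_le_of_bishopGromov μ hr.le (by linarith)
      (fun x => dist_le_diam_of_mem isBounded_of_compactSpace trivial trivial) (hBG q r · hr)
  have hV : 0 < μ.real Set.univ := ENNReal.toReal_pos hμ (measure_ne_top μ _)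
  have hball : 0 < μ.real (ball q r) := by nlinarith [pow_pos hr n, pow_pos hd n]
  calc (r / d) ^ n * (d / 2 - r) * μ.real Set.univ
      = μ.real Set.univ * r ^ n / d ^ n * (d / 2 - r) := by rw [div_pow]; ring
    _ ≤ μ.real (ball q r) * (dist p q - r) := by
        gcongr ?_ * ?_
        · exact (div_le_iff₀ (pow_pos hd n)).2 hvol
        · linarith
    _ < ∫ x, dist p x ∂μ :=
        measureReal_ball_mul_lt_integral_dist μ (by linarith) ((measureReal_ne_zero_iff).1 hball.ne')

end

/-- Theorem 1.1: Let `M` be an `n`-dimensional compact Riemannian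
manifold with nonnegative Ricci curvature (encoded, as Mathlib has no Riemannian
curvature, by the Euclidean Bishop–Gromov monotonicity of `r ↦ μ(B_p(r))/r^n`),
with positive volume and at least two points.  Then for every `p`,
`∫ d(p,x) dvol > c(n) · diam(M) · Vol(M)` with
`c(n) = (n/(n+1))^n / (2^{n+1}(n+1))`. -/
theorem integral_dist_gt_of_nonneg_ricci
    {M : Type*} [MetricSpace M] [CompactSpace M] [Nontrivial M]
    [MeasurableSpace M] [OpensMeasurableSpace M]
    (μ : Measure M) [IsFiniteMeasure μ] (hμ : μ Set.univ ≠ 0)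
    (n : ℕ) (hn : 1 ≤ n)
    (hBG : ∀ (p : M) (r R : ℝ), 0 < r → r ≤ R →
      μ (Metric.ball p R) * ENNReal.ofReal (r ^ n) ≤
        μ (Metric.ball p r) * ENNReal.ofReal (R ^ n))
    (p : M) :
    ((n : ℝ) / (n + 1)) ^ n / (2 ^ (n + 1) * (n + 1)) *
        Metric.diam (Set.univ : Set M) * (μ Set.univ).toReal <
      ∫ x, dist p x ∂μ := by
  set d := diam (Set.univ : Set M)
  have hd : 0 < d := diam_pos Set.nontrivial_univ isBounded_of_compactSpace
  have hn' : (1 : ℝ) ≤ n := by exact_mod_cast hn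
  have hr : 0 < n * d / (2 * (n + 1)) := by positivity
  have hrd : n * d / (2 * (n + 1)) < d / 2 := by
    rw [div_lt_div_iff₀ (by positivity) two_pos]
    nlinarith
  have hc : ((n : ℝ) / (n + 1)) ^ n / (2 ^ (n + 1) * (n + 1)) * d =
      (n * d / (2 * (n + 1)) / d) ^ n * (d / 2 - n * d / (2 * (n + 1))) := by
    have hratio : n * d / (2 * (n + 1)) / d = (n / (n + 1)) / 2 := by field_simp
    have hgap : d / 2 - n * d / (2 * (n + 1)) = d / (2 * (n + 1)) := by field_simp; ring
    rw [hratio, hgap, div_pow _ (2 : ℝ), div_mul_div_comm, pow_succ, mul_assoc,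
      div_mul_eq_mul_div, mul_div_assoc]
  rw [hc, ← measureReal_def]
  exact integral_dist_gt_of_bishopGromov μ hμ hBG p hr hrd
end

section
/- Let M be an n-dimensional complete noncompact Riemannian manifold with nonnegative Ricci curvature. Then for every p ∈ M and every d > 0, ∫_{B_p(d)} d(p,x) dvol > c(n) · d · Vol(B_p(d)), where c(n) = 3/(2√(n²+n+1) + 2n + 1) · (n/(n + 2 + 2√(n²+n+1)))^n. -/
open MeasureTheory Metric

/-!
Put `t = α d` and pick `q` with `d(p, q) = d - t`. Then `B_q(t) ⊆ B_p(d)`, and on `B_q(t)` the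
function `d(p, ·)` exceeds `d - 2t`, so `∫_{B_p(d)} d(p, x) > (d - 2t) Vol(B_q(t))`. On the other
hand `B_p(d) ⊆ B_q(2d - t)`, so Bishop–Gromov gives
`Vol(B_p(d)) ≤ ((2d - t)/t)^n Vol(B_q(t))`. Together,
`∫_{B_p(d)} d(p, x) > (1 - 2α) (α/(2 - α))^n d Vol(B_p(d))` for every `0 < α ≤ 1/2`, and
`α = n + 1 - √(n² + n + 1)` maximises the constant: it is the root in `(0, 1/2)` of
`α² - 2(n + 1)α + n = 0`, the vanishing of the logarithmic derivative.
-/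

theorem setIntegral_gt_of_const_lt_real {X : Type*} [MeasurableSpace X] {μ : Measure X}
    {f : X → ℝ} {s : Set X} {c : ℝ} (hs : MeasurableSet s) (hμs : μ s ≠ ⊤) (hμs₀ : μ s ≠ 0)
    (hf : ∀ x ∈ s, c < f x) (hfint : IntegrableOn f s μ) :
    c * μ.real s < ∫ x in s, f x ∂μ := by
  have hc : IntegrableOn (fun _ ↦ c) s μ := integrableOn_const hμs
  have hpos : 0 < ∫ x in s, (f x - c) ∂μ := by
    rw [setIntegral_pos_iff_support_of_nonneg_ae (f := fun x ↦ f x - c) _ (hfint.sub hc)]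
    · refine lt_of_lt_of_le (pos_iff_ne_zero.mpr hμs₀) (measure_mono fun x hx ↦ ⟨?_, hx⟩)
      exact sub_ne_zero.mpr (hf x hx).ne'
    · filter_upwards [ae_restrict_mem hs] with x hx
      exact sub_nonneg.mpr (hf x hx).le
  rw [integral_sub hfint hc, setIntegral_const, smul_eq_mul] at hpos
  linarith

section PseudoMetric

variable {X : Type*} [PseudoMetricSpace X] [MeasurableSpace X] {μ : Measure X}

theorem measureReal_mul_pow_le_of_subset_ball {n : ℕ} {q : X} {r s : ℝ} {t : Set X}
    (hBG : μ (ball q s) * ENNReal.ofReal (r ^ n) ≤ μ (ball q r) * ENNReal.ofReal (s ^ n))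
    (hr : 0 ≤ r) (hs : 0 ≤ s) (ht : t ⊆ ball q s) (hfin : μ (ball q r) ≠ ⊤) :
    μ.real t * r ^ n ≤ μ.real (ball q r) * s ^ n := by
  have h := ENNReal.toReal_mono (ENNReal.mul_ne_top hfin ENNReal.ofReal_ne_top)
    ((mul_le_mul_left (measure_mono ht) _).trans hBG)
  rwa [ENNReal.toReal_mul, ENNReal.toReal_mul, ENNReal.toReal_ofReal (by positivity),
    ENNReal.toReal_ofReal (by positivity)] at h

variable [OpensMeasurableSpace X]

theorem integrableOn_dist_ball (p : X) (r : ℝ) (h : μ (ball p r) ≠ ⊤) :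
    IntegrableOn (dist p ·) (ball p r) μ := by
  refine Measure.integrableOn_of_bounded h
    (continuous_const.dist continuous_id).aestronglyMeasurable (M := r) ?_
  filter_upwards [ae_restrict_mem measurableSet_ball] with x hx
  rw [Real.norm_of_nonneg dist_nonneg, dist_comm]
  exact (mem_ball.mp hx).le

theorem mul_measureReal_ball_lt_setIntegral_dist {p q : X} {r d : ℝ} (hrd : dist p q + r ≤ d)
    (hfin : μ (ball p d) ≠ ⊤) (hpos : μ (ball q r) ≠ 0) :
    (dist p q - r) * μ.real (ball q r) < ∫ x in ball p d, dist p x ∂μ := by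
  have hsub : ball q r ⊆ ball p d := ball_subset_ball' (by rw [dist_comm]; linarith)
  have hint := integrableOn_dist_ball p d hfin
  calc (dist p q - r) * μ.real (ball q r)
      < ∫ x in ball q r, dist p x ∂μ := by
        refine setIntegral_gt_of_const_lt_real measurableSet_ball
          (ne_top_of_le_ne_top hfin (measure_mono hsub)) hpos (fun x hx ↦ ?_) (hint.mono_set hsub)
        linarith [dist_triangle p x q, dist_comm x q, mem_ball'.mp hx]
    _ ≤ ∫ x in ball p d, dist p x ∂μ :=
        setIntegral_mono_set hint (.of_forall fun _ ↦ dist_nonneg) hsub.eventuallyLE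

theorem mul_measureReal_ball_lt_setIntegral_dist_of_bishopGromov (n : ℕ)
    (hBG : ∀ (q : X) (r s : ℝ), 0 < r → r ≤ s →
      μ (ball q s) * ENNReal.ofReal (r ^ n) ≤ μ (ball q r) * ENNReal.ofReal (s ^ n))
    (hray : ∀ (p : X) (s : ℝ), 0 ≤ s → ∃ q : X, dist p q = s)
    (hpos : ∀ (q : X) (s : ℝ), 0 < s → 0 < μ (ball q s))
    (hfin : ∀ (q : X) (s : ℝ), μ (ball q s) < ⊤)
    (p : X) {d α : ℝ} (hd : 0 < d) (hα₀ : 0 < α) (hα : α ≤ 1 / 2) :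
    (1 - 2 * α) * (α / (2 - α)) ^ n * d * μ.real (ball p d) <
      ∫ x in ball p d, dist p x ∂μ := by
  set t := α * d
  have ht : 0 < t := mul_pos hα₀ hd
  have h2t : 2 * t ≤ d := by nlinarith
  obtain ⟨q, hq⟩ := hray p (d - t) (by linarith)
  have hvol : μ.real (ball p d) * t ^ n ≤ μ.real (ball q t) * (2 * d - t) ^ n :=
    measureReal_mul_pow_le_of_subset_ball (hBG q t (2 * d - t) ht (by linarith)) ht.le
      (by linarith) (ball_subset_ball' (by rw [hq]; linarith)) (hfin q t).ne
  have hlower : (d - 2 * t) * μ.real (ball q t) < ∫ x in ball p d, dist p x ∂μ := by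
    have := mul_measureReal_ball_lt_setIntegral_dist (μ := μ) (r := t) (by rw [hq]; linarith)
      (hfin p d).ne (hpos q t ht).ne'
    rwa [hq, sub_sub, ← two_mul] at this
  have hratio : α / (2 - α) = t / (2 * d - t) := by
    rw [show 2 * d - t = (2 - α) * d by ring, mul_div_mul_right _ _ hd.ne']
  refine lt_of_le_of_lt ?_ hlower
  calc (1 - 2 * α) * (α / (2 - α)) ^ n * d * μ.real (ball p d)
      = (d - 2 * t) * (μ.real (ball p d) * t ^ n / (2 * d - t) ^ n) := by
        rw [hratio, div_pow]; ring
    _ ≤ (d - 2 * t) * μ.real (ball q t) := by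
        gcongr
        exact div_le_of_le_mul₀ (pow_nonneg (by linarith) n) measureReal_nonneg hvol

end PseudoMetric

noncomputable def optimalRatio (n : ℕ) : ℝ := n + 1 - Real.sqrt ((n : ℝ) ^ 2 + n + 1)

theorem optimalRatio_spec {n : ℕ} (hn : 1 ≤ n) :
    0 < optimalRatio n ∧ optimalRatio n ≤ 1 / 2 ∧
      1 - 2 * optimalRatio n = 3 / (2 * Real.sqrt ((n : ℝ) ^ 2 + n + 1) + 2 * n + 1) ∧
      optimalRatio n / (2 - optimalRatio n) =
        n / (n + 2 + 2 * Real.sqrt ((n : ℝ) ^ 2 + n + 1)) := by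
  rw [optimalRatio]
  set s := Real.sqrt ((n : ℝ) ^ 2 + n + 1)
  have hn₁ : (1 : ℝ) ≤ n := by exact_mod_cast hn
  have hs₂ : s ^ 2 = (n : ℝ) ^ 2 + n + 1 := Real.sq_sqrt (by positivity)
  have hs₀ : 0 ≤ s := Real.sqrt_nonneg _
  have hs_gt : (n : ℝ) + 1 / 2 < s := by nlinarith
  have hs_lt : s < (n : ℝ) + 1 := by nlinarith
  refine ⟨by linarith, by linarith, ?_, ?_⟩
  · rw [eq_div_iff (by positivity)]
    linear_combination 4 * hs₂
  · rw [div_eq_div_iff (by linarith) (by positivity)]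
    linear_combination (-2 : ℝ) * hs₂

theorem integral_dist_ball_gt_of_nonneg_ricci_noncompact_general
    {M : Type*} [MetricSpace M]
    [MeasurableSpace M] [OpensMeasurableSpace M]
    (μ : Measure M) (n : ℕ) (hn : 1 ≤ n)
    (hBG : ∀ (q : M) (r s : ℝ), 0 < r → r ≤ s →
      μ (Metric.ball q s) * ENNReal.ofReal (r ^ n) ≤
        μ (Metric.ball q r) * ENNReal.ofReal (s ^ n))
    (hray : ∀ (p : M) (s : ℝ), 0 ≤ s → ∃ q : M, dist p q = s)
    (hpos : ∀ (q : M) (s : ℝ), 0 < s → 0 < μ (Metric.ball q s))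
    (hfin : ∀ (q : M) (s : ℝ), μ (Metric.ball q s) < ⊤)
    (p : M) (d : ℝ) (hd : 0 < d) :
    3 / (2 * Real.sqrt ((n : ℝ) ^ 2 + n + 1) + 2 * n + 1) *
        ((n : ℝ) / (n + 2 + 2 * Real.sqrt ((n : ℝ) ^ 2 + n + 1))) ^ n *
        d * (μ (Metric.ball p d)).toReal <
      ∫ x in Metric.ball p d, dist p x ∂μ := by
  obtain ⟨hα₀, hα, hconst, hratio⟩ := optimalRatio_spec hn
  rw [← hconst, ← hratio]
  exact mul_measureReal_ball_lt_setIntegral_dist_of_bishopGromov n hBG hray hpos hfin p hd hα₀ hα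

/-- Theorem 4.2: Let `M` be an `n`-dimensional complete noncompact
Riemannian manifold with `Ric ≥ 0`.  The curvature hypothesis is encoded (Mathlib
has no Riemannian curvature) by the Euclidean Bishop–Gromov monotonicity of
`r ↦ μ(B_q(r))/r^n`; noncompactness and completeness supply, for every `p` and
`s ≥ 0`, a point at distance exactly `s` from `p` (hypothesis `hray`).  Then for
every `p` and every `d > 0`,
`∫_{B_p(d)} d(p,x) dvol > c(n) · d · Vol(B_p(d))` with
`c(n) = 3/(2√(n²+n+1)+2n+1) · (n/(n+2+2√(n²+n+1)))^n`. -/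
theorem integral_dist_ball_gt_of_nonneg_ricci_noncompact
    {M : Type*} [MetricSpace M] [CompleteSpace M] [NoncompactSpace M]
    [MeasurableSpace M] [OpensMeasurableSpace M]
    (μ : Measure M) (n : ℕ) (hn : 1 ≤ n)
    (hBG : ∀ (q : M) (r s : ℝ), 0 < r → r ≤ s →
      μ (Metric.ball q s) * ENNReal.ofReal (r ^ n) ≤
        μ (Metric.ball q r) * ENNReal.ofReal (s ^ n))
    (hray : ∀ (p : M) (s : ℝ), 0 ≤ s → ∃ q : M, dist p q = s)
    (hpos : ∀ (q : M) (s : ℝ), 0 < s → 0 < μ (Metric.ball q s))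
    (hfin : ∀ (q : M) (s : ℝ), μ (Metric.ball q s) < ⊤)
    (p : M) (d : ℝ) (hd : 0 < d) :
    3 / (2 * Real.sqrt ((n : ℝ) ^ 2 + n + 1) + 2 * n + 1) *
        ((n : ℝ) / (n + 2 + 2 * Real.sqrt ((n : ℝ) ^ 2 + n + 1))) ^ n *
        d * (μ (Metric.ball p d)).toReal <
      ∫ x in Metric.ball p d, dist p x ∂μ :=
  integral_dist_ball_gt_of_nonneg_ricci_noncompact_general μ n hn hBG hray hpos hfin p d hd
end
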